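/- Let A(γ) = diag(β̂)(W + γ𝟙𝟙ᵀ) where W is the adjacency matrix of the counterexample graph G, β̂ assigns β̄ > δ to all nodes of C_m, and ρ(diag(β̂(C_m))U) = β̄ > δ. Then ε(β̂; 0) = δ − β̄ < 0, i.e., under the greedy allocation the disease-free equilibrium of the linearized dynamics is unstable at γ = 0. -/

import Mathlib

/-!
With respect to the splitting `Fin n ⊕ Fin m`, `diag(β̂) W` is block upper triangular with a zero
block on the independent set and the block `β̄ U` on the cycle, so its spectrum is
`{0} ∪ σ(β̄ U)`. The all-ones vector is a `β̄`-eigenvector of `β̄ U`, and `hρ` bounds the modulus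
of every other eigenvalue by `β̄`; hence the rightmost eigenvalue is `β̄`, and the shift by `-δ I`
moves it to `β̄ - δ`.
-/

open Matrix

theorem Matrix.mem_spectrum_of_mulVec_eq_smul {K n : Type*} [Field K] [Fintype n] [DecidableEq n]
    {A : Matrix n n K} {v : n → K} {μ : K} (hv : v ≠ 0) (h : A *ᵥ v = μ • v) :
    μ ∈ spectrum K A := by
  rw [← Matrix.spectrum_toLin', ← Module.End.hasEigenvalue_iff_mem_spectrum]
  exact Module.End.hasEigenvalue_of_hasEigenvector
    ⟨Module.End.mem_eigenspace_iff.mpr (by simpa using h), hv⟩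

theorem Matrix.spectrum_fromBlocks_zero₂₁ {K l m : Type*} [Field K] [Fintype l] [Fintype m]
    [DecidableEq l] [DecidableEq m] (A : Matrix l l K) (B : Matrix l m K) (D : Matrix m m K) :
    spectrum K (fromBlocks A B 0 D) = spectrum K A ∪ spectrum K D := by
  ext r
  simp [mem_spectrum_iff_isRoot_charpoly]

theorem spectrum.zero_subset {K A : Type*} [Field K] [Ring A] [Algebra K A] :
    spectrum K (0 : A) ⊆ {0} := by
  intro r hr
  by_contra h
  exact spectrum.mem_iff.mp hr (by simpa using (Ne.isUnit h).map (algebraMap K A))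

def Matrix.cyclicShift (R : Type*) [Zero R] [One R] (m : ℕ) [NeZero m] :
    Matrix (Fin m) (Fin m) R :=
  of fun i j => if j = i + 1 then 1 else 0

theorem Matrix.cyclicShift_mulVec_one (R : Type*) [NonAssocSemiring R] (m : ℕ) [NeZero m] :
    cyclicShift R m *ᵥ 1 = 1 := by
  ext i
  simp [cyclicShift, mulVec, dotProduct]

theorem Matrix.mem_spectrum_smul_cyclicShift {K : Type*} [Field K] (m : ℕ) [NeZero m] (c : K) :
    c ∈ spectrum K (c • cyclicShift K m) :=
  mem_spectrum_of_mulVec_eq_smul one_ne_zero (by rw [smul_mulVec, cyclicShift_mulVec_one])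

theorem IsGreatest.re_spectrum_sub_smul_one {A : Type*} [Ring A] [Algebra ℂ A] {a : A} {r : ℝ}
    (h : IsGreatest (Complex.re '' spectrum ℂ a) r) (δ : ℝ) :
    IsGreatest (Complex.re '' spectrum ℂ (a - (δ : ℂ) • 1)) (r - δ) := by
  rw [← Algebra.algebraMap_eq_smul_one, ← spectrum.sub_singleton_eq]
  constructor
  · obtain ⟨z, hz, rfl⟩ := h.1
    exact ⟨z - δ, Set.sub_mem_sub hz rfl, by simp⟩
  · rintro _ ⟨_, ⟨z, hz, _, rfl, rfl⟩, rfl⟩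
    simpa using h.2 ⟨z, hz, rfl⟩

theorem stmt19_general (n m : ℕ) [NeZero m] (δ βbar : ℝ) (hβδ : δ < βbar)
    (U : Matrix (Fin m) (Fin m) ℂ) (hU : U = Matrix.of fun i j => if j = i + 1 then 1 else 0)
    (W : Matrix (Fin n ⊕ Fin m) (Fin n ⊕ Fin m) ℂ)
    (hW : W = Matrix.fromBlocks 0 (Matrix.of fun _ _ => 1) 0 U)
    (βhat : Fin n ⊕ Fin m → ℝ)
    (hC : ∀ a : Fin m, βhat (Sum.inr a) = βbar)
    (hρ : sSup ((fun z : ℂ => ‖z‖) ''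
        spectrum ℂ ((Matrix.diagonal fun a => (βhat (Sum.inr a) : ℂ)) * U)) = βbar) :
    -sSup (Complex.re '' spectrum ℂ
        ((Matrix.diagonal fun i => (βhat i : ℂ)) * W - (δ : ℂ) • 1)) = δ - βbar ∧
      δ - βbar < 0 := by
  have hU' : U = cyclicShift ℂ m := hU
  have hcycle :
      (diagonal fun a => (βhat (Sum.inr a) : ℂ)) * U = (βbar : ℂ) • cyclicShift ℂ m := by
    simp only [hC, hU', smul_eq_diagonal_mul]
  have hblocks : (diagonal fun i => (βhat i : ℂ)) * W =
      fromBlocks 0 (of fun a _ => (βhat (Sum.inl a) : ℂ)) 0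
        ((βbar : ℂ) • cyclicShift ℂ m) := by
    rw [← hcycle, hW]
    ext (i | i) (j | j) <;> simp [diagonal_mul]
  rw [hcycle] at hρ
  have hβbar_nonneg : 0 ≤ βbar :=
    hρ ▸ Real.sSup_nonneg (by rintro _ ⟨z, -, rfl⟩; exact norm_nonneg z)
  have hgreatest :
      IsGreatest (Complex.re '' spectrum ℂ ((diagonal fun i => (βhat i : ℂ)) * W)) βbar := by
    rw [hblocks, spectrum_fromBlocks_zero₂₁]
    refine ⟨⟨βbar, Or.inr (mem_spectrum_smul_cyclicShift m _), rfl⟩, ?_⟩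
    rintro _ ⟨z, hz | hz, rfl⟩
    · rw [Set.mem_singleton_iff.mp (spectrum.zero_subset hz)]
      exact hβbar_nonneg
    · calc z.re ≤ ‖z‖ := Complex.re_le_norm z
        _ ≤ βbar := hρ ▸ le_csSup ((Matrix.finite_spectrum _).image _).bddAbove ⟨z, hz, rfl⟩
  rw [(hgreatest.re_spectrum_sub_smul_one δ).csSup_eq]
  exact ⟨by ring, by linarith⟩

theorem stmt19 (n m : ℕ) [NeZero n] [NeZero m] (δ βbar : ℝ) (hδ : 0 < δ) (hβδ : δ < βbar)
    (U : Matrix (Fin m) (Fin m) ℂ) (hU : U = Matrix.of fun i j => if j = i + 1 then 1 else 0)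
    (W : Matrix (Fin n ⊕ Fin m) (Fin n ⊕ Fin m) ℂ)
    (hW : W = Matrix.fromBlocks 0 (Matrix.of fun _ _ => 1) 0 U)
    (βhat : Fin n ⊕ Fin m → ℝ) (hpos : ∀ i, 0 < βhat i)
    (hC : ∀ a : Fin m, βhat (Sum.inr a) = βbar)
    (hρ : sSup ((fun z : ℂ => ‖z‖) ''
        spectrum ℂ ((Matrix.diagonal fun a => (βhat (Sum.inr a) : ℂ)) * U)) = βbar) :
    -sSup (Complex.re '' spectrum ℂ
        ((Matrix.diagonal fun i => (βhat i : ℂ)) * W - (δ : ℂ) • 1)) = δ - βbar ∧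
      δ - βbar < 0 :=
  stmt19_general n m δ βbar hβδ U hU W hW βhat hC hρ
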